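/- (Lemma 1, secant-error bounds for dynamic TR1 updates.) Let F : ℝⁿ → ℝᵐ be continuously differentiable with Jacobian DF Lipschitz continuous with constant c₃, and let c₁ ∈ (0,1). Let (wᵏ)ₖ in ℝⁿ, (σᵏ)ₖ in ℝᵐ, and (Aᵏ)ₖ in ℝ^{m×n} be sequences with sᵏ = wᵏ⁺¹ − wᵏ, yᵏ = F(wᵏ⁺¹) − F(wᵏ), γᵏ = DF(wᵏ⁺¹)ᵀσᵏ, ρᵏ = yᵏ − Aᵏsᵏ, τᵏ = γᵏ − (Aᵏ)ᵀσᵏ. Suppose at every iteration k: σᵏ ≠ 0, both skipping conditions hold, namely |(τᵏ)ᵀsᵏ| ≥ c₁‖σᵏ‖‖ρᵏ‖ and |(σᵏ)ᵀρᵏ| ≥ c₁‖sᵏ‖‖τᵏ‖, and Aᵏ⁺¹ = Aᵏ + αᵏ ρᵏ (τᵏ)ᵀ where αᵏ equals either the forward scaling 1/((τᵏ)ᵀsᵏ) or the adjoint scaling 1/((σᵏ)ᵀρᵏ) (chosen arbitrarily per iteration, with the corresponding denominator nonzero). Define η^{l,k} = max{‖wᵖ − w^q‖ : k ≤ q ≤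 p ≤ l}. Then for every k and every l ≥ k + 1, both ‖yᵏ − Aˡ sᵏ‖ ≤ (c₃/c₁)(2/c₁² + 1)^{l−k} η^{l,k} ‖sᵏ‖ and ‖γᵏ − (Aˡ)ᵀ σᵏ‖ ≤ (c₃/c₁)(2/c₁² + 1)^{l−k} η^{l,k} ‖σᵏ‖. -/

import Mathlib

/-!
An update `Aˡ⁺¹ = Aˡ + αˡ ρˡ (τˡ)ᵀ` changes the secant error `yᵏ - Aˡ sᵏ` of an earlier step by
`αˡ ⟪τˡ, sᵏ⟫ ρˡ`, and `⟪τˡ, sᵏ⟫ = ⟪σˡ, (DF(wˡ⁺¹) - Aˡ) sᵏ⟫` is at most `‖σˡ‖` times the current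
error plus the mean value defect `‖yᵏ - DF(wˡ⁺¹) sᵏ‖ ≤ c₃ η^{l+1,k} ‖sᵏ‖`. Both skipping
conditions together give `|αˡ| ‖σˡ‖ ‖ρˡ‖ ≤ 1/c₁²`, so each update multiplies the error by at most
`1 + 1/c₁²` and adds `c₃ η ‖sᵏ‖ / c₁²`; the factor `2/c₁² + 1` absorbs both. The adjoint error
`γᵏ - (Aˡ)ᵀσᵏ` behaves in the same way with `(s, τ)` and `(σ, ρ)` exchanged. At the first update
the chosen scaling annihilates one of the two errors, and the other one is
`αᵏ (⟪σᵏ, ρᵏ⟫ - ⟪τᵏ, sᵏ⟫)` times `ρᵏ` or `τᵏ`, where `⟪σᵏ, ρᵏ⟫ - ⟪τᵏ, sᵏ⟫ = ⟪σᵏ, yᵏ - DF(wᵏ⁺¹) sᵏ⟫`.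
-/

open scoped RealInnerProductSpace Matrix Matrix.Norms.L2Operator

/-- Multiplication of a matrix with a vector, as a map between Euclidean spaces. -/
noncomputable def matVec {m n : ℕ} (A : Matrix (Fin m) (Fin n) ℝ)
    (v : EuclideanSpace ℝ (Fin n)) : EuclideanSpace ℝ (Fin m) :=
  Matrix.toEuclideanLin A v

/-- Outer product `u vᵀ` of two Euclidean vectors, as a matrix. -/
def outer {m n : ℕ} (u : EuclideanSpace ℝ (Fin m)) (v : EuclideanSpace ℝ (Fin n)) :
    Matrix (Fin m) (Fin n) ℝ :=
  Matrix.of fun i j => u i * v j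

section MatVec

variable {m n : ℕ}

lemma matVec_add (A B : Matrix (Fin m) (Fin n) ℝ) (x : EuclideanSpace ℝ (Fin n)) :
    matVec (A + B) x = matVec A x + matVec B x := by
  simp [matVec]

lemma matVec_smul (c : ℝ) (A : Matrix (Fin m) (Fin n) ℝ) (x : EuclideanSpace ℝ (Fin n)) :
    matVec (c • A) x = c • matVec A x := by
  simp [matVec]

lemma matVec_outer (u : EuclideanSpace ℝ (Fin m)) (v x : EuclideanSpace ℝ (Fin n)) :
    matVec (outer u v) x = ⟪v, x⟫ • u := by
  ext i
  simp [matVec, outer, Matrix.mulVec, dotProduct, PiLp.inner_apply, Finset.mul_sum, mul_assoc,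
    mul_comm]

lemma outer_transpose (u : EuclideanSpace ℝ (Fin m)) (v : EuclideanSpace ℝ (Fin n)) :
    (outer u v)ᵀ = outer v u := by
  ext i j
  simp [outer, mul_comm]

lemma inner_matVec_transpose (A : Matrix (Fin m) (Fin n) ℝ) (u : EuclideanSpace ℝ (Fin m))
    (x : EuclideanSpace ℝ (Fin n)) : ⟪matVec Aᵀ u, x⟫ = ⟪u, matVec A x⟫ := by
  rw [matVec, matVec, ← Matrix.conjTranspose_eq_transpose_of_trivial,
    Matrix.toEuclideanLin_conjTranspose_eq_adjoint, LinearMap.adjoint_inner_left]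

lemma matVec_add_smul_outer (A : Matrix (Fin m) (Fin n) ℝ) (α : ℝ)
    (u : EuclideanSpace ℝ (Fin m)) (v x : EuclideanSpace ℝ (Fin n)) :
    matVec (A + α • outer u v) x = matVec A x + (α * ⟪v, x⟫) • u := by
  rw [matVec_add, matVec_smul, matVec_outer, smul_smul]

lemma matVec_transpose_add_smul_outer (A : Matrix (Fin m) (Fin n) ℝ) (α : ℝ)
    (u z : EuclideanSpace ℝ (Fin m)) (v : EuclideanSpace ℝ (Fin n)) :
    matVec (A + α • outer u v)ᵀ z = matVec Aᵀ z + (α * ⟪u, z⟫) • v := by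
  rw [Matrix.transpose_add, Matrix.transpose_smul, outer_transpose, matVec_add_smul_outer]

end MatVec

lemma norm_image_sub_sub_le_of_lipschitz_hasFDerivAt {E F : Type*} [NormedAddCommGroup E]
    [NormedSpace ℝ E] [NormedAddCommGroup F] [NormedSpace ℝ F] {f : E → F}
    {f' : E → E →L[ℝ] F} {C : ℝ} (hC : 0 ≤ C) (hf : ∀ x, HasFDerivAt f (f' x) x)
    (hf' : ∀ x₁ x₂, ‖f' x₁ - f' x₂‖ ≤ C * ‖x₁ - x₂‖) (a b z : E) :
    ‖f b - f a - f' z (b - a)‖ ≤ C * max ‖z - a‖ ‖z - b‖ * ‖b - a‖ := by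
  have mem {x : E} (hx : ‖z - x‖ ≤ max ‖z - a‖ ‖z - b‖) :
      x ∈ Metric.closedBall z (max ‖z - a‖ ‖z - b‖) := by
    rwa [mem_closedBall_iff_norm']
  refine (convex_closedBall _ _).norm_image_sub_le_of_norm_hasFDerivWithin_le'
    (fun x _ => (hf x).hasFDerivWithinAt) (fun x hx => ?_) (mem (le_max_left _ _))
    (mem (le_max_right _ _))
  exact (hf' x z).trans (mul_le_mul_of_nonneg_left (mem_closedBall_iff_norm.1 hx) hC)

section IterateDiam

variable {E : Type*} [SeminormedAddCommGroup E]

/-- `iterateDiam w l k` is the paper's `η^{l,k}`, the diameter of `{w k, …, w l}`. -/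
noncomputable def iterateDiam (w : ℕ → E) (l k : ℕ) : ℝ :=
  sSup {x : ℝ | ∃ p q, k ≤ q ∧ q ≤ p ∧ p ≤ l ∧ x = ‖w p - w q‖}

lemma norm_sub_le_iterateDiam (w : ℕ → E) {l k p q : ℕ} (hp : k ≤ p) (hpl : p ≤ l)
    (hq : k ≤ q) (hql : q ≤ l) : ‖w p - w q‖ ≤ iterateDiam w l k := by
  have hbdd : BddAbove {x : ℝ | ∃ p q, k ≤ q ∧ q ≤ p ∧ p ≤ l ∧ x = ‖w p - w q‖} := by
    refine (((Set.finite_Iic l).prod (Set.finite_Iic l)).image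
      fun pq : ℕ × ℕ => ‖w pq.1 - w pq.2‖).bddAbove.mono ?_
    rintro x ⟨p, q, -, hqp, hpl, rfl⟩
    exact ⟨(p, q), ⟨hpl, hqp.trans hpl⟩, rfl⟩
  rcases le_total q p with hqp | hpq
  · exact le_csSup hbdd ⟨p, q, hq, hqp, hpl, rfl⟩
  · exact le_csSup hbdd ⟨q, p, hp, hpq, hql, norm_sub_rev _ _⟩

lemma iterateDiam_nonneg (w : ℕ → E) (l k : ℕ) : 0 ≤ iterateDiam w l k :=
  Real.sSup_nonneg fun _ ⟨_, _, _, _, _, hx⟩ => hx ▸ norm_nonneg _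

lemma iterateDiam_le_succ (w : ℕ → E) (l k : ℕ) : iterateDiam w l k ≤ iterateDiam w (l + 1) k :=
  Real.sSup_le (fun _ ⟨_, _, hq, hqp, hpl, hx⟩ => hx ▸
    norm_sub_le_iterateDiam w (hq.trans hqp) (hpl.trans l.le_succ) hq
      ((hqp.trans hpl).trans l.le_succ)) (iterateDiam_nonneg w _ _)

end IterateDiam

lemma norm_secant_sub_matVec_le_iterateDiam {n m : ℕ} {c₃ : ℝ} (hc₃ : 0 ≤ c₃)
    {F : EuclideanSpace ℝ (Fin n) → EuclideanSpace ℝ (Fin m)}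
    {J : EuclideanSpace ℝ (Fin n) → Matrix (Fin m) (Fin n) ℝ}
    (hJ : ∀ w, HasFDerivAt F (LinearMap.toContinuousLinearMap (Matrix.toEuclideanLin (J w))) w)
    (hLip : ∀ w₁ w₂, ‖J w₁ - J w₂‖ ≤ c₃ * ‖w₁ - w₂‖) (w : ℕ → EuclideanSpace ℝ (Fin n))
    {i j k L : ℕ} (hi : k ≤ i) (hiL : i + 1 ≤ L) (hj : k ≤ j) (hjL : j ≤ L) :
    ‖F (w (i + 1)) - F (w i) - matVec (J (w j)) (w (i + 1) - w i)‖ ≤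
      c₃ * iterateDiam w L k * ‖w (i + 1) - w i‖ := by
  have hmvt := norm_image_sub_sub_le_of_lipschitz_hasFDerivAt hc₃ hJ
    (fun w₁ w₂ => by rw [← map_sub, ← map_sub]; exact hLip w₁ w₂) (w i) (w (i + 1)) (w j)
  refine hmvt.trans ?_
  gcongr
  exact max_le (norm_sub_le_iterateDiam w hj hjL hi (by omega))
    (norm_sub_le_iterateDiam w hj hjL (by omega) hiL)

section Scaling

variable {E F : Type*} [NormedAddCommGroup E] [InnerProductSpace ℝ E] [NormedAddCommGroup F]
  [InnerProductSpace ℝ F]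

/-- With `x₁ x₂ y₁ y₂ = τ s σ ρ`, the TR1 scaling `α` is the forward scaling `1 / ⟪τ, s⟫` or the
adjoint scaling `1 / ⟪σ, ρ⟫`. -/
def IsTR1Scaling (α : ℝ) (x₁ x₂ : E) (y₁ y₂ : F) : Prop :=
  (⟪x₁, x₂⟫ ≠ 0 ∧ α = 1 / ⟪x₁, x₂⟫) ∨ (⟪y₁, y₂⟫ ≠ 0 ∧ α = 1 / ⟪y₁, y₂⟫)

variable {α c : ℝ} {x₁ x₂ : E} {y₁ y₂ : F}

lemma IsTR1Scaling.symm (h : IsTR1Scaling α x₁ x₂ y₁ y₂) : IsTR1Scaling α y₁ y₂ x₁ x₂ :=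
  Or.symm h

lemma IsTR1Scaling.abs_one_sub_mul_inner_le (h : IsTR1Scaling α x₁ x₂ y₁ y₂) :
    |1 - α * ⟪x₁, x₂⟫| ≤ |α| * |⟪y₁, y₂⟫ - ⟪x₁, x₂⟫| := by
  rcases h with ⟨hx, rfl⟩ | ⟨hy, rfl⟩
  · rw [one_div_mul_cancel hx, sub_self, abs_zero]
    positivity
  · rw [← abs_mul, mul_sub, one_div_mul_cancel hy]

lemma IsTR1Scaling.inner_ne_zero (h : IsTR1Scaling α x₁ x₂ y₁ y₂) (hc : 0 < c)
    (hskip : c * ‖y₁‖ * ‖y₂‖ ≤ |⟪x₁, x₂⟫|) : ⟪x₁, x₂⟫ ≠ 0 := by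
  rcases h with ⟨hx, -⟩ | ⟨hy, -⟩
  · exact hx
  · have hpos : 0 < ‖y₁‖ * ‖y₂‖ := (abs_pos.2 hy).trans_le (abs_real_inner_le_norm y₁ y₂)
    rw [← abs_pos]
    nlinarith

lemma IsTR1Scaling.abs_mul_norm_mul_norm_le (h : IsTR1Scaling α x₁ x₂ y₁ y₂) (hc : 0 < c)
    (hc1 : c ≤ 1) (hskip₁ : c * ‖y₁‖ * ‖y₂‖ ≤ |⟪x₁, x₂⟫|)
    (hskip₂ : c * ‖x₂‖ * ‖x₁‖ ≤ |⟪y₁, y₂⟫|) : |α| * (‖y₁‖ * ‖y₂‖) ≤ 1 / c ^ 2 := by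
  have hcs := abs_real_inner_le_norm x₁ x₂
  rcases h with ⟨hx, rfl⟩ | ⟨hy, rfl⟩
  · rw [abs_one_div, one_div_mul_eq_div, div_le_div_iff₀ (abs_pos.2 hx) (by positivity)]
    have hP := mul_nonneg (mul_nonneg hc.le (norm_nonneg y₁)) (norm_nonneg y₂)
    nlinarith [mul_le_mul_of_nonneg_left hc1 hP]
  · -- `c² ‖y₁‖ ‖y₂‖ ≤ c |⟪x₁, x₂⟫| ≤ c ‖x₁‖ ‖x₂‖ ≤ |⟪y₁, y₂⟫|`
    rw [abs_one_div, one_div_mul_eq_div, div_le_div_iff₀ (abs_pos.2 hy) (by positivity)]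
    nlinarith

lemma IsTR1Scaling.abs_mul_norm_mul_norm_le' (h : IsTR1Scaling α x₁ x₂ y₁ y₂) (hc : 0 < c)
    (hc1 : c ≤ 1) (hskip₁ : c * ‖y₁‖ * ‖y₂‖ ≤ |⟪x₁, x₂⟫|)
    (hskip₂ : c * ‖x₂‖ * ‖x₁‖ ≤ |⟪y₁, y₂⟫|) : |α| * (‖x₂‖ * ‖x₁‖) ≤ 1 / c ^ 2 := by
  rw [mul_comm ‖x₂‖]
  exact h.symm.abs_mul_norm_mul_norm_le hc hc1 (by rwa [mul_right_comm])
    (by rwa [mul_right_comm])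

end Scaling

section TR1Update

variable {m n : ℕ} {A A' J : Matrix (Fin m) (Fin n) ℝ} {s τ : EuclideanSpace ℝ (Fin n)}
  {y σ ρ : EuclideanSpace ℝ (Fin m)} {α K d : ℝ}

lemma inner_sub_inner_eq_inner_secant_sub (hρ : ρ = y - matVec A s)
    (hτ : τ = matVec Jᵀ σ - matVec Aᵀ σ) : ⟪σ, ρ⟫ - ⟪τ, s⟫ = ⟪σ, y - matVec J s⟫ := by
  subst hρ hτ
  simp only [inner_sub_left, inner_sub_right, inner_matVec_transpose]
  ring

lemma norm_sub_matVec_tr1_self_le (hα : IsTR1Scaling α τ s σ ρ)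
    (hA' : A' = A + α • outer ρ τ) (hρ : ρ = y - matVec A s)
    (hτ : τ = matVec Jᵀ σ - matVec Aᵀ σ) (hK : |α| * (‖σ‖ * ‖ρ‖) ≤ K)
    (hδ : ‖y - matVec J s‖ ≤ d * ‖s‖) : ‖y - matVec A' s‖ ≤ K * (d * ‖s‖) := by
  have hρ' : y - matVec A' s = (1 - α * ⟪τ, s⟫) • ρ := by
    rw [hA', matVec_add_smul_outer, sub_smul, one_smul, hρ]
    abel
  have hds : 0 ≤ d * ‖s‖ := (norm_nonneg _).trans hδ
  rw [hρ', norm_smul, Real.norm_eq_abs]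
  calc |1 - α * ⟪τ, s⟫| * ‖ρ‖
      ≤ |α| * |⟪σ, y - matVec J s⟫| * ‖ρ‖ := by
        rw [← inner_sub_inner_eq_inner_secant_sub hρ hτ]
        gcongr
        exact hα.abs_one_sub_mul_inner_le
    _ ≤ |α| * (‖σ‖ * (d * ‖s‖)) * ‖ρ‖ := by
        grw [abs_real_inner_le_norm, hδ]
    _ = |α| * (‖σ‖ * ‖ρ‖) * (d * ‖s‖) := by ring
    _ ≤ K * (d * ‖s‖) := by gcongr

lemma norm_matVec_transpose_sub_tr1_self_le (hα : IsTR1Scaling α τ s σ ρ)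
    (hA' : A' = A + α • outer ρ τ) (hρ : ρ = y - matVec A s)
    (hτ : τ = matVec Jᵀ σ - matVec Aᵀ σ) (hK : |α| * (‖s‖ * ‖τ‖) ≤ K) (hd : 0 ≤ d)
    (hδ : ‖y - matVec J s‖ ≤ d * ‖s‖) : ‖matVec Jᵀ σ - matVec A'ᵀ σ‖ ≤ K * (d * ‖σ‖) := by
  have hτ' : matVec Jᵀ σ - matVec A'ᵀ σ = (1 - α * ⟪σ, ρ⟫) • τ := by
    rw [hA', matVec_transpose_add_smul_outer, sub_smul, one_smul, hτ, real_inner_comm]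
    abel
  rw [hτ', norm_smul, Real.norm_eq_abs]
  calc |1 - α * ⟪σ, ρ⟫| * ‖τ‖
      ≤ |α| * |⟪σ, y - matVec J s⟫| * ‖τ‖ := by
        rw [← inner_sub_inner_eq_inner_secant_sub hρ hτ, abs_sub_comm ⟪σ, ρ⟫]
        gcongr
        exact hα.symm.abs_one_sub_mul_inner_le
    _ ≤ |α| * (‖σ‖ * (d * ‖s‖)) * ‖τ‖ := by
        grw [abs_real_inner_le_norm, hδ]
    _ = |α| * (‖s‖ * ‖τ‖) * (d * ‖σ‖) := by ring
    _ ≤ K * (d * ‖σ‖) := by gcongr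

lemma norm_sub_matVec_tr1_le_add (hA' : A' = A + α • outer ρ τ)
    (hτ : τ = matVec Jᵀ σ - matVec Aᵀ σ) (hK : |α| * (‖σ‖ * ‖ρ‖) ≤ K)
    (hδ : ‖y - matVec J s‖ ≤ d * ‖s‖) :
    ‖y - matVec A' s‖ ≤ ‖y - matVec A s‖ + K * (d * ‖s‖ + ‖y - matVec A s‖) := by
  have hτs : |⟪τ, s⟫| ≤ ‖σ‖ * (d * ‖s‖ + ‖y - matVec A s‖) := by
    have h : ⟪τ, s⟫ = ⟪σ, y - matVec A s⟫ - ⟪σ, y - matVec J s⟫ := by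
      subst hτ
      simp only [inner_sub_left, inner_sub_right, inner_matVec_transpose]
      ring
    rw [h, mul_add, add_comm]
    grw [abs_sub, abs_real_inner_le_norm, abs_real_inner_le_norm, hδ]
  have he : 0 ≤ d * ‖s‖ + ‖y - matVec A s‖ := add_nonneg ((norm_nonneg _).trans hδ) (norm_nonneg _)
  calc ‖y - matVec A' s‖ = ‖(y - matVec A s) - (α * ⟪τ, s⟫) • ρ‖ := by
        rw [hA', matVec_add_smul_outer, sub_add_eq_sub_sub]
    _ ≤ ‖y - matVec A s‖ + |α| * |⟪τ, s⟫| * ‖ρ‖ := by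
        grw [norm_sub_le, norm_smul, Real.norm_eq_abs, abs_mul]
    _ ≤ ‖y - matVec A s‖ + |α| * (‖σ‖ * (d * ‖s‖ + ‖y - matVec A s‖)) * ‖ρ‖ := by grw [hτs]
    _ = ‖y - matVec A s‖ + |α| * (‖σ‖ * ‖ρ‖) * (d * ‖s‖ + ‖y - matVec A s‖) := by ring
    _ ≤ ‖y - matVec A s‖ + K * (d * ‖s‖ + ‖y - matVec A s‖) := by gcongr

lemma norm_matVec_transpose_sub_tr1_le_add (hA' : A' = A + α • outer ρ τ)
    (hρ : ρ = y - matVec A s) (hK : |α| * (‖s‖ * ‖τ‖) ≤ K) (hd : 0 ≤ d)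
    (hδ : ‖y - matVec J s‖ ≤ d * ‖s‖) (u : EuclideanSpace ℝ (Fin m)) :
    ‖matVec Jᵀ u - matVec A'ᵀ u‖ ≤
      ‖matVec Jᵀ u - matVec Aᵀ u‖ + K * (d * ‖u‖ + ‖matVec Jᵀ u - matVec Aᵀ u‖) := by
  have hρu : |⟪ρ, u⟫| ≤ ‖s‖ * (d * ‖u‖ + ‖matVec Jᵀ u - matVec Aᵀ u‖) := by
    have h : ⟪ρ, u⟫ = ⟪y - matVec J s, u⟫ + ⟪matVec Jᵀ u - matVec Aᵀ u, s⟫ := by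
      subst hρ
      simp only [inner_sub_left, inner_sub_right, inner_matVec_transpose, real_inner_comm u]
      ring
    rw [h]
    grw [abs_add_le, abs_real_inner_le_norm, abs_real_inner_le_norm, hδ]
    linarith
  calc ‖matVec Jᵀ u - matVec A'ᵀ u‖
      = ‖(matVec Jᵀ u - matVec Aᵀ u) - (α * ⟪ρ, u⟫) • τ‖ := by
        rw [hA', matVec_transpose_add_smul_outer, sub_add_eq_sub_sub]
    _ ≤ ‖matVec Jᵀ u - matVec Aᵀ u‖ + |α| * |⟪ρ, u⟫| * ‖τ‖ := by
        grw [norm_sub_le, norm_smul, Real.norm_eq_abs, abs_mul]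
    _ ≤ ‖matVec Jᵀ u - matVec Aᵀ u‖
          + |α| * (‖s‖ * (d * ‖u‖ + ‖matVec Jᵀ u - matVec Aᵀ u‖)) * ‖τ‖ := by grw [hρu]
    _ = ‖matVec Jᵀ u - matVec Aᵀ u‖
          + |α| * (‖s‖ * ‖τ‖) * (d * ‖u‖ + ‖matVec Jᵀ u - matVec Aᵀ u‖) := by ring
    _ ≤ ‖matVec Jᵀ u - matVec Aᵀ u‖ + K * (d * ‖u‖ + ‖matVec Jᵀ u - matVec Aᵀ u‖) := by
        gcongr

end TR1Update

lemma le_of_tr1_error_recursion {c : ℝ} (hc : 0 < c) (hc1 : c ≤ 1) {e B : ℕ → ℝ} {k : ℕ}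
    (hB0 : ∀ l, 0 ≤ B l) (hB : ∀ l, B l ≤ B (l + 1))
    (hbase : e (k + 1) ≤ 1 / c ^ 2 * B (k + 1))
    (hstep : ∀ l, k + 1 ≤ l → e (l + 1) ≤ e l + 1 / c ^ 2 * (B (l + 1) + e l)) :
    ∀ l, k + 1 ≤ l → e l ≤ (2 / c ^ 2 + 1) ^ (l - k) / c * B l := by
  intro l hl
  induction l, hl using Nat.le_induction with
  | base =>
    refine hbase.trans (mul_le_mul_of_nonneg_right ?_ (hB0 _))
    have h : (2 / c ^ 2 + 1) * c ^ 2 = 2 + c ^ 2 := by field_simp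
    rw [Nat.add_sub_cancel_left, pow_one, div_le_div_iff₀ (by positivity) hc, h]
    nlinarith
  | succ l hl ih =>
    set M := (2 / c ^ 2 + 1) ^ (l - k) / c
    have hM : 1 ≤ M := by
      rw [le_div_iff₀ hc, one_mul]
      exact hc1.trans (one_le_pow₀ (by linarith [show 0 ≤ 2 / c ^ 2 by positivity]))
    calc e (l + 1) ≤ (1 + 1 / c ^ 2) * e l + 1 / c ^ 2 * B (l + 1) := by
          linarith [hstep l hl]
      _ ≤ (1 + 1 / c ^ 2) * (M * B (l + 1)) + 1 / c ^ 2 * (M * B (l + 1)) := by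
          have hl' : e l ≤ M * B (l + 1) :=
            ih.trans (mul_le_mul_of_nonneg_left (hB l) (zero_le_one.trans hM))
          gcongr
          exact le_mul_of_one_le_left (hB0 _) hM
      _ = (2 / c ^ 2 + 1) ^ (l + 1 - k) / c * B (l + 1) := by
          rw [show l + 1 - k = l - k + 1 by omega, pow_succ]
          ring

theorem tr1_dynamic_secant_error_bounds_general {n m : ℕ} (c₁ c₃ : ℝ) (hc₁0 : 0 < c₁) (hc₁1 : c₁ < 1)
    (F : EuclideanSpace ℝ (Fin n) → EuclideanSpace ℝ (Fin m))
    (J : EuclideanSpace ℝ (Fin n) → Matrix (Fin m) (Fin n) ℝ)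
    (hJ : ∀ w, HasFDerivAt F (LinearMap.toContinuousLinearMap (Matrix.toEuclideanLin (J w))) w)
    (hLip : ∀ w₁ w₂, ‖J w₁ - J w₂‖ ≤ c₃ * ‖w₁ - w₂‖)
    (w : ℕ → EuclideanSpace ℝ (Fin n)) (σ : ℕ → EuclideanSpace ℝ (Fin m))
    (A : ℕ → Matrix (Fin m) (Fin n) ℝ)
    (s : ℕ → EuclideanSpace ℝ (Fin n)) (hs : ∀ k, s k = w (k + 1) - w k)
    (y : ℕ → EuclideanSpace ℝ (Fin m)) (hy : ∀ k, y k = F (w (k + 1)) - F (w k))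
    (γ : ℕ → EuclideanSpace ℝ (Fin n)) (hγ : ∀ k, γ k = matVec (J (w (k + 1)))ᵀ (σ k))
    (ρ : ℕ → EuclideanSpace ℝ (Fin m)) (hρ : ∀ k, ρ k = y k - matVec (A k) (s k))
    (τ : ℕ → EuclideanSpace ℝ (Fin n)) (hτ : ∀ k, τ k = γ k - matVec (A k)ᵀ (σ k))
    (hskip1 : ∀ k, c₁ * ‖σ k‖ * ‖ρ k‖ ≤ |⟪τ k, s k⟫|)
    (hskip2 : ∀ k, c₁ * ‖s k‖ * ‖τ k‖ ≤ |⟪σ k, ρ k⟫|)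
    (hupd : ∀ k,
      (⟪τ k, s k⟫ ≠ 0 ∧ A (k + 1) = A k + (1 / ⟪τ k, s k⟫) • outer (ρ k) (τ k)) ∨
      (⟪σ k, ρ k⟫ ≠ 0 ∧ A (k + 1) = A k + (1 / ⟪σ k, ρ k⟫) • outer (ρ k) (τ k)))
    (η : ℕ → ℕ → ℝ)
    (hη : ∀ l k, η l k = sSup {x : ℝ | ∃ p q, k ≤ q ∧ q ≤ p ∧ p ≤ l ∧ x = ‖w p - w q‖}) :
    ∀ k l, k + 1 ≤ l →
      ‖y k - matVec (A l) (s k)‖ ≤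
        (c₃ / c₁) * (2 / c₁ ^ 2 + 1) ^ (l - k) * η l k * ‖s k‖ ∧
      ‖γ k - matVec (A l)ᵀ (σ k)‖ ≤
        (c₃ / c₁) * (2 / c₁ ^ 2 + 1) ^ (l - k) * η l k * ‖σ k‖ := by
  obtain rfl : η = iterateDiam w := funext₂ hη
  have hτ' (j : ℕ) : τ j = matVec (J (w (j + 1)))ᵀ (σ j) - matVec (A j)ᵀ (σ j) := by
    rw [hτ, hγ]
  have hscaling (j : ℕ) :
      ∃ α, IsTR1Scaling α (τ j) (s j) (σ j) (ρ j) ∧ A (j + 1) = A j + α • outer (ρ j) (τ j) := by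
    rcases hupd j with ⟨h, hA⟩ | ⟨h, hA⟩
    exacts [⟨_, .inl ⟨h, rfl⟩, hA⟩, ⟨_, .inr ⟨h, rfl⟩, hA⟩]
  choose α hα hA using hscaling
  have hK₁ (j : ℕ) := (hα j).abs_mul_norm_mul_norm_le hc₁0 hc₁1.le (hskip1 j) (hskip2 j)
  have hK₂ (j : ℕ) := (hα j).abs_mul_norm_mul_norm_le' hc₁0 hc₁1.le (hskip1 j) (hskip2 j)
  have hc₃ : 0 ≤ c₃ := by
    refine nonneg_of_mul_nonneg_left ((norm_nonneg _).trans (hLip (w 1) (w 0))) ?_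
    rw [← hs, norm_pos_iff]
    exact fun h => (hα 0).inner_ne_zero hc₁0 (hskip1 0) (by rw [h, inner_zero_right])
  intro k l hkl
  have hsec {i j L : ℕ} (hi : k ≤ i) (hiL : i + 1 ≤ L) (hj : k ≤ j) (hjL : j ≤ L) :
      ‖y i - matVec (J (w j)) (s i)‖ ≤ c₃ * iterateDiam w L k * ‖s i‖ := by
    rw [hy, hs]
    exact norm_secant_sub_matVec_le_iterateDiam hc₃ hJ hLip w hi hiL hj hjL
  have hd (L : ℕ) : 0 ≤ c₃ * iterateDiam w L k := mul_nonneg hc₃ (iterateDiam_nonneg w L k)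
  have hd_mono (L : ℕ) : c₃ * iterateDiam w L k ≤ c₃ * iterateDiam w (L + 1) k :=
    mul_le_mul_of_nonneg_left (iterateDiam_le_succ w L k) hc₃
  constructor
  · refine (le_of_tr1_error_recursion hc₁0 hc₁1.le (e := fun l => ‖y k - matVec (A l) (s k)‖)
      (B := fun L => c₃ * iterateDiam w L k * ‖s k‖) (fun L => mul_nonneg (hd L) (norm_nonneg _))
      (fun L => mul_le_mul_of_nonneg_right (hd_mono L) (norm_nonneg _)) ?_ ?_ l hkl).trans_eq
      (by ring)
    · exact norm_sub_matVec_tr1_self_le (hα k) (hA k) (hρ k) (hτ' k) (hK₁ k)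
        (hsec le_rfl le_rfl k.le_succ le_rfl)
    · exact fun l hl => norm_sub_matVec_tr1_le_add (hA l) (hτ' l) (hK₁ l)
        (hsec le_rfl (by omega) (by omega) le_rfl)
  · rw [hγ k]
    refine (le_of_tr1_error_recursion hc₁0 hc₁1.le
      (e := fun l => ‖matVec (J (w (k + 1)))ᵀ (σ k) - matVec (A l)ᵀ (σ k)‖)
      (B := fun L => c₃ * iterateDiam w L k * ‖σ k‖) (fun L => mul_nonneg (hd L) (norm_nonneg _))
      (fun L => mul_le_mul_of_nonneg_right (hd_mono L) (norm_nonneg _)) ?_ ?_ l hkl).trans_eq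
      (by ring)
    · exact norm_matVec_transpose_sub_tr1_self_le (hα k) (hA k) (hρ k) (hτ' k) (hK₂ k) (hd _)
        (hsec le_rfl le_rfl k.le_succ le_rfl)
    · exact fun l hl => norm_matVec_transpose_sub_tr1_le_add (hA l) (hρ l) (hK₂ l) (hd _)
        (hsec (by omega) le_rfl (by omega) (by omega)) (σ k)

/-- Lemma 1: secant-error bounds for the dynamic (forward/adjoint) TR1
quasi-Newton Jacobian updates under the skipping conditions. -/
theorem tr1_dynamic_secant_error_bounds {n m : ℕ} (c₁ c₃ : ℝ) (hc₁0 : 0 < c₁) (hc₁1 : c₁ < 1)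
    (F : EuclideanSpace ℝ (Fin n) → EuclideanSpace ℝ (Fin m))
    (J : EuclideanSpace ℝ (Fin n) → Matrix (Fin m) (Fin n) ℝ)
    (hJ : ∀ w, HasFDerivAt F (LinearMap.toContinuousLinearMap (Matrix.toEuclideanLin (J w))) w)
    (hLip : ∀ w₁ w₂, ‖J w₁ - J w₂‖ ≤ c₃ * ‖w₁ - w₂‖)
    (w : ℕ → EuclideanSpace ℝ (Fin n)) (σ : ℕ → EuclideanSpace ℝ (Fin m))
    (A : ℕ → Matrix (Fin m) (Fin n) ℝ)
    (s : ℕ → EuclideanSpace ℝ (Fin n)) (hs : ∀ k, s k = w (k + 1) - w k)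
    (y : ℕ → EuclideanSpace ℝ (Fin m)) (hy : ∀ k, y k = F (w (k + 1)) - F (w k))
    (γ : ℕ → EuclideanSpace ℝ (Fin n)) (hγ : ∀ k, γ k = matVec (J (w (k + 1)))ᵀ (σ k))
    (ρ : ℕ → EuclideanSpace ℝ (Fin m)) (hρ : ∀ k, ρ k = y k - matVec (A k) (s k))
    (τ : ℕ → EuclideanSpace ℝ (Fin n)) (hτ : ∀ k, τ k = γ k - matVec (A k)ᵀ (σ k))
    (hσ : ∀ k, σ k ≠ 0)
    (hskip1 : ∀ k, c₁ * ‖σ k‖ * ‖ρ k‖ ≤ |⟪τ k, s k⟫|)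
    (hskip2 : ∀ k, c₁ * ‖s k‖ * ‖τ k‖ ≤ |⟪σ k, ρ k⟫|)
    (hupd : ∀ k,
      (⟪τ k, s k⟫ ≠ 0 ∧ A (k + 1) = A k + (1 / ⟪τ k, s k⟫) • outer (ρ k) (τ k)) ∨
      (⟪σ k, ρ k⟫ ≠ 0 ∧ A (k + 1) = A k + (1 / ⟪σ k, ρ k⟫) • outer (ρ k) (τ k)))
    (η : ℕ → ℕ → ℝ)
    (hη : ∀ l k, η l k = sSup {x : ℝ | ∃ p q, k ≤ q ∧ q ≤ p ∧ p ≤ l ∧ x = ‖w p - w q‖}) :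
    ∀ k l, k + 1 ≤ l →
      ‖y k - matVec (A l) (s k)‖ ≤
        (c₃ / c₁) * (2 / c₁ ^ 2 + 1) ^ (l - k) * η l k * ‖s k‖ ∧
      ‖γ k - matVec (A l)ᵀ (σ k)‖ ≤
        (c₃ / c₁) * (2 / c₁ ^ 2 + 1) ^ (l - k) * η l k * ‖σ k‖ :=
  tr1_dynamic_secant_error_bounds_general c₁ c₃ hc₁0 hc₁1 F J hJ hLip w σ A s hs y hy γ hγ ρ hρ τ hτ
    hskip1 hskip2 hupd η hη
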